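/- (Strict coverage gain without process noise and state constraints, Lemma 4.) Assume zero process noise, D = 0, that A is invertible, that there are no state half-space constraints, and that the control polytope U = {u ∈ ℝᵐ : (a_j^u)ᵀ u ≤ b_j^u for all j} is nonempty and compact. Let 𝒢 = P^BALL(μ_G, r_G) and let 𝒢⁻ be a set of moment pairs such that 𝒢⁻ ⊆ 𝒢 and such that the mean projection Proj(𝒢⁻) = {μ : ∃Σ, (μ, Σ) ∈ 𝒢⁻} is contained in a closed Euclidean ball 𝔹(c₀, r₀) with ‖c₀ − μ_G‖₂ + r₀ < r_G. If BRS_T(𝒢⁻) is nonempty, then BRS_T(𝒢⁻) is a strict subset of BRS_T(𝒢). -/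

import Mathlib

open Matrix

noncomputable def euclNorm {n : ℕ} (v : Fin n → ℝ) : ℝ := Real.sqrt (∑ i, v i ^ 2)

noncomputable def lamMax {n : ℕ} (M : Matrix (Fin n) (Fin n) ℝ) : ℝ :=
  sSup {r : ℝ | ∃ v : Fin n → ℝ, euclNorm v = 1 ∧ r = v ⬝ᵥ M.mulVec v}

noncomputable def lamMin {n : ℕ} (M : Matrix (Fin n) (Fin n) ℝ) : ℝ :=
  sInf {r : ℝ | ∃ v : Fin n → ℝ, euclNorm v = 1 ∧ r = v ⬝ᵥ M.mulVec v}

noncomputable def specNorm {n p : ℕ} (M : Matrix (Fin n) (Fin p) ℝ) : ℝ :=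
  Real.sqrt (lamMax (Mᵀ * M))

structure Policy (n m T : ℕ) (A : Matrix (Fin n) (Fin n) ℝ) (B : Matrix (Fin n) (Fin m) ℝ) where
  xbar : ℕ → Fin n → ℝ
  ubar : ℕ → Fin m → ℝ
  K : ℕ → Matrix (Fin m) (Fin n) ℝ
  xbar_dyn : ∀ k, k < T → xbar (k + 1) = A.mulVec (xbar k) + B.mulVec (ubar k)

namespace Policy

variable {n m T : ℕ} {A : Matrix (Fin n) (Fin n) ℝ} {B : Matrix (Fin n) (Fin m) ℝ}

noncomputable def mean (C : Policy n m T A B) (mu0 : Fin n → ℝ) : ℕ → Fin n → ℝ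
  | 0 => mu0
  | k + 1 => A.mulVec (C.mean mu0 k) + B.mulVec (C.ubar k)
      + B.mulVec ((C.K k).mulVec (C.mean mu0 k - C.xbar k))

noncomputable def cov (C : Policy n m T A B) (D : Matrix (Fin n) (Fin n) ℝ)
    (Sig0 : Matrix (Fin n) (Fin n) ℝ) : ℕ → Matrix (Fin n) (Fin n) ℝ
  | 0 => Sig0
  | k + 1 => (A + B * C.K k) * C.cov D Sig0 k * (A + B * C.K k)ᵀ + D * Dᵀ

noncomputable def clProd (C : Policy n m T A B) : ℕ → Matrix (Fin n) (Fin n) ℝ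
  | 0 => 1
  | k + 1 => (A + B * C.K k) * C.clProd k

end Policy

def stateOK {n m T : ℕ} {A : Matrix (Fin n) (Fin n) ℝ} {B : Matrix (Fin n) (Fin m) ℝ}
    (c : ℝ) {I : ℕ} (ax : Fin I → Fin n → ℝ) (bx : Fin I → ℝ)
    (D : Matrix (Fin n) (Fin n) ℝ) (C : Policy n m T A B)
    (mu0 : Fin n → ℝ) (Sig0 : Matrix (Fin n) (Fin n) ℝ) : Prop :=
  ∀ i : Fin I, ∀ k ≤ T,
    ax i ⬝ᵥ C.mean mu0 k + c * Real.sqrt (ax i ⬝ᵥ (C.cov D Sig0 k).mulVec (ax i)) ≤ bx i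

def ctrlOK {n m T : ℕ} {A : Matrix (Fin n) (Fin n) ℝ} {B : Matrix (Fin n) (Fin m) ℝ}
    (c : ℝ) {J : ℕ} (au : Fin J → Fin m → ℝ) (bu : Fin J → ℝ)
    (D : Matrix (Fin n) (Fin n) ℝ) (C : Policy n m T A B)
    (mu0 : Fin n → ℝ) (Sig0 : Matrix (Fin n) (Fin n) ℝ) : Prop :=
  ∀ j : Fin J, ∀ k < T,
    au j ⬝ᵥ (C.ubar k + (C.K k).mulVec (C.mean mu0 k - C.xbar k))
      + c * Real.sqrt (au j ⬝ᵥ (C.K k * C.cov D Sig0 k * (C.K k)ᵀ).mulVec (au j)) ≤ bu j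

def inBall {n : ℕ} (c : ℝ) (muHat : Fin n → ℝ) (rHat : ℝ)
    (mu : Fin n → ℝ) (Sig : Matrix (Fin n) (Fin n) ℝ) : Prop :=
  euclNorm (mu - muHat) + c * Real.sqrt (lamMax Sig) ≤ rHat

def BRS {n m : ℕ} (T : ℕ) (A : Matrix (Fin n) (Fin n) ℝ) (B : Matrix (Fin n) (Fin m) ℝ)
    (D : Matrix (Fin n) (Fin n) ℝ) (c : ℝ) {I J : ℕ}
    (ax : Fin I → Fin n → ℝ) (bx : Fin I → ℝ) (au : Fin J → Fin m → ℝ) (bu : Fin J → ℝ)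
    (S : Set ((Fin n → ℝ) × Matrix (Fin n) (Fin n) ℝ)) :
    Set ((Fin n → ℝ) × Matrix (Fin n) (Fin n) ℝ) :=
  {p | p.2.PosSemidef ∧ ∃ C : Policy n m T A B, C.xbar 0 = p.1 ∧
    stateOK c ax bx D C p.1 p.2 ∧ ctrlOK c au bu D C p.1 p.2 ∧
    (C.mean p.1 T, C.cov D p.2 T) ∈ S}

def Proj {n : ℕ} (S : Set ((Fin n → ℝ) × Matrix (Fin n) (Fin n) ℝ)) : Set (Fin n → ℝ) :=
  {mu | ∃ Sig, (mu, Sig) ∈ S}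

/-
With `D = 0` and `Σ₀ = 0` the covariance stays zero, and since `x̄₀ = μ₀` the mean follows the
reference trajectory, so the terminal mean is `A^T μ₀ + ψ(u)`, where `ψ(u)` is the forced response
to an admissible control sequence `u ∈ U^T`. By compactness of `U^T` some admissible `u⋆` minimises
the first coordinate of `ψ`. Since `A` is invertible we may pick `μ₀` with
`A^T μ₀ + ψ(u⋆) = μ_G + r_G e₀`, a point on the boundary of the ball `𝒢`, which the open-loop policy
`u⋆` reaches with zero covariance. Every feasible policy from `μ₀` ends at a mean whose first
coordinate is at least `μ_G,₀ + r_G`, which lies outside the ball `𝔹(c₀, r₀)` containing the means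
of `𝒢⁻`.
-/

section EuclNorm

variable {n : ℕ}

theorem euclNorm_eq_norm (v : Fin n → ℝ) : euclNorm v = ‖WithLp.toLp 2 v‖ := by
  simp [euclNorm, EuclideanSpace.norm_eq]

theorem apply_le_euclNorm (v : Fin n → ℝ) (i : Fin n) : v i ≤ euclNorm v := by
  rw [euclNorm_eq_norm]
  exact (le_abs_self _).trans (PiLp.norm_apply_le (WithLp.toLp 2 v) i)

theorem euclNorm_single (i : Fin n) (r : ℝ) : euclNorm (Pi.single i r) = |r| := by
  rw [euclNorm_eq_norm, PiLp.toLp_single, PiLp.norm_single, Real.norm_eq_abs]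

theorem lamMax_zero [NeZero n] : lamMax (0 : Matrix (Fin n) (Fin n) ℝ) = 0 := by
  have hset :
      {r : ℝ | ∃ v : Fin n → ℝ, euclNorm v = 1 ∧ r = v ⬝ᵥ (0 : Matrix _ _ ℝ) *ᵥ v} = {0} := by
    ext r
    simp only [zero_mulVec, dotProduct_zero, Set.mem_ofPred_eq, Set.mem_singleton_iff]
    exact ⟨fun ⟨_, _, h⟩ => h, fun h => ⟨Pi.single 0 1, by simp [euclNorm_single], h⟩⟩
  rw [lamMax, hset, csSup_singleton]

end EuclNorm

section OpenLoop

variable {n m : ℕ} (A : Matrix (Fin n) (Fin n) ℝ) (B : Matrix (Fin n) (Fin m) ℝ)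

noncomputable def openLoop (u : ℕ → Fin m → ℝ) (x₀ : Fin n → ℝ) : ℕ → Fin n → ℝ
  | 0 => x₀
  | k + 1 => A *ᵥ openLoop u x₀ k + B *ᵥ u k

variable {A B}

theorem openLoop_congr {u v : ℕ → Fin m → ℝ} (x₀ : Fin n → ℝ) {k : ℕ} (h : ∀ j < k, u j = v j) :
    openLoop A B u x₀ k = openLoop A B v x₀ k := by
  induction k with
  | zero => rfl
  | succ k ih =>
    simp only [openLoop, ih fun j hj => h j (Nat.lt_succ_of_lt hj), h k (Nat.lt_succ_self k)]

theorem openLoop_eq_pow_mulVec_add (u : ℕ → Fin m → ℝ) (x₀ : Fin n → ℝ) (k : ℕ) :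
    openLoop A B u x₀ k = (A ^ k) *ᵥ x₀ + openLoop A B u 0 k := by
  induction k with
  | zero => simp [openLoop]
  | succ k ih =>
    simp only [openLoop, ih, mulVec_add, mulVec_mulVec, ← pow_succ']
    abel

theorem continuous_openLoop (x₀ : Fin n → ℝ) (k : ℕ) :
    Continuous fun u : ℕ → Fin m → ℝ => openLoop A B u x₀ k := by
  induction k with
  | zero => exact continuous_const
  | succ k ih =>
    exact (continuous_const.matrix_mulVec ih).add
      (continuous_const.matrix_mulVec (continuous_apply k))

end OpenLoop

theorem exists_admissible_isMinOn_openLoop {n m : ℕ} (A : Matrix (Fin n) (Fin n) ℝ)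
    (B : Matrix (Fin n) (Fin m) ℝ) {U : Set (Fin m → ℝ)} (hU : IsCompact U) (hUne : U.Nonempty)
    (T : ℕ) (x₀ : Fin n → ℝ) {f : (Fin n → ℝ) → ℝ} (hf : Continuous f) :
    ∃ v : ℕ → Fin m → ℝ, (∀ k < T, v k ∈ U) ∧
      ∀ u : ℕ → Fin m → ℝ, (∀ k < T, u k ∈ U) →
        f (openLoop A B v x₀ T) ≤ f (openLoop A B u x₀ T) := by
  -- only the first `T` controls matter, so minimise over `U^T × {0}^ℕ`, compact by Tychonoff
  let truncate (u : ℕ → Fin m → ℝ) : ℕ → Fin m → ℝ := fun k => if k < T then u k else 0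
  let K : Set (ℕ → Fin m → ℝ) := Set.univ.pi fun k => if k < T then U else {0}
  have truncate_mem {u : ℕ → Fin m → ℝ} (hu : ∀ k < T, u k ∈ U) : truncate u ∈ K := by
    intro k _
    by_cases hk : k < T <;> simp [truncate, hk, hu]
  have hK : IsCompact K := isCompact_univ_pi fun k => by
    split_ifs
    exacts [hU, isCompact_singleton]
  obtain ⟨u₀, hu₀⟩ := hUne
  obtain ⟨v, hvK, hmin⟩ := hK.exists_isMinOn ⟨_, truncate_mem fun _ _ => hu₀⟩
    (hf.comp (continuous_openLoop x₀ T)).continuousOn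
  refine ⟨v, fun k hk => by simpa [hk] using hvK k trivial, fun u hu => ?_⟩
  rw [openLoop_congr x₀ fun j (hj : j < T) => (if_pos hj : truncate u j = u j).symm]
  exact hmin (truncate_mem hu)

namespace Policy

variable {n m T : ℕ} {A : Matrix (Fin n) (Fin n) ℝ} {B : Matrix (Fin n) (Fin m) ℝ}

theorem xbar_eq_openLoop (C : Policy n m T A B) {k : ℕ} (hk : k ≤ T) :
    C.xbar k = openLoop A B C.ubar (C.xbar 0) k := by
  induction k with
  | zero => rfl
  | succ k ih => rw [C.xbar_dyn k hk, ih (Nat.le_of_succ_le hk), openLoop]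

theorem mean_eq_xbar (C : Policy n m T A B) {μ₀ : Fin n → ℝ} (h₀ : C.xbar 0 = μ₀) {k : ℕ}
    (hk : k ≤ T) : C.mean μ₀ k = C.xbar k := by
  induction k with
  | zero => exact h₀.symm
  | succ k ih =>
    rw [mean, ih (Nat.le_of_succ_le hk), sub_self, mulVec_zero, mulVec_zero, add_zero,
      C.xbar_dyn k hk]

theorem mean_eq_pow_mulVec_add_openLoop (C : Policy n m T A B) {μ₀ : Fin n → ℝ}
    (h₀ : C.xbar 0 = μ₀) : C.mean μ₀ T = (A ^ T) *ᵥ μ₀ + openLoop A B C.ubar 0 T := by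
  rw [C.mean_eq_xbar h₀ le_rfl, C.xbar_eq_openLoop le_rfl, h₀, openLoop_eq_pow_mulVec_add]

theorem cov_zero_zero (C : Policy n m T A B) (k : ℕ) : C.cov 0 0 k = 0 := by
  induction k with
  | zero => rfl
  | succ k ih => simp [cov, ih]

variable (T A B) in
noncomputable def ofOpenLoop (u : ℕ → Fin m → ℝ) (μ₀ : Fin n → ℝ) : Policy n m T A B where
  xbar := openLoop A B u μ₀
  ubar := u
  K _ := 0
  xbar_dyn _ _ := rfl

end Policy

section BRS

variable {n m I J T : ℕ} {A : Matrix (Fin n) (Fin n) ℝ} {B : Matrix (Fin n) (Fin m) ℝ}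
  {D : Matrix (Fin n) (Fin n) ℝ} {c : ℝ} {ax : Fin I → Fin n → ℝ} {bx : Fin I → ℝ}
  {au : Fin J → Fin m → ℝ} {bu : Fin J → ℝ}

theorem BRS_mono {S S' : Set ((Fin n → ℝ) × Matrix (Fin n) (Fin n) ℝ)} (h : S ⊆ S') :
    BRS T A B D c ax bx au bu S ⊆ BRS T A B D c ax bx au bu S' :=
  fun _ ⟨hSig, C, h₀, hx, hu, hS⟩ => ⟨hSig, C, h₀, hx, hu, h hS⟩

theorem ctrlOK.ubar_mem (hc : 0 ≤ c) {C : Policy n m T A B} {μ₀ : Fin n → ℝ}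
    {Sig₀ : Matrix (Fin n) (Fin n) ℝ} (h₀ : C.xbar 0 = μ₀) (h : ctrlOK c au bu D C μ₀ Sig₀) {k : ℕ}
    (hk : k < T) (j : Fin J) : au j ⬝ᵥ C.ubar k ≤ bu j := by
  have := h j k hk
  rw [C.mean_eq_xbar h₀ hk.le, sub_self, mulVec_zero, add_zero] at this
  linarith [mul_nonneg hc (Real.sqrt_nonneg (au j ⬝ᵥ (C.K k * C.cov D Sig₀ k * (C.K k)ᵀ) *ᵥ au j))]

theorem exists_openLoop_mem_Proj_of_mem_BRS (hc : 0 ≤ c)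
    {S : Set ((Fin n → ℝ) × Matrix (Fin n) (Fin n) ℝ)} {μ₀ : Fin n → ℝ}
    {Sig₀ : Matrix (Fin n) (Fin n) ℝ} (h : (μ₀, Sig₀) ∈ BRS T A B D c ax bx au bu S) :
    ∃ u : ℕ → Fin m → ℝ, (∀ k < T, ∀ j, au j ⬝ᵥ u k ≤ bu j) ∧
      (A ^ T) *ᵥ μ₀ + openLoop A B u 0 T ∈ Proj S := by
  obtain ⟨-, C, h₀, -, hu, hS⟩ := h
  exact ⟨C.ubar, fun k hk => hu.ubar_mem hc h₀ hk, _, C.mean_eq_pow_mulVec_add_openLoop h₀ ▸ hS⟩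

theorem mem_BRS_zero_of_openLoop {ax : Fin 0 → Fin n → ℝ} {bx : Fin 0 → ℝ}
    {S : Set ((Fin n → ℝ) × Matrix (Fin n) (Fin n) ℝ)} {u : ℕ → Fin m → ℝ} {μ₀ : Fin n → ℝ}
    (hu : ∀ k < T, ∀ j, au j ⬝ᵥ u k ≤ bu j) (hS : ((A ^ T) *ᵥ μ₀ + openLoop A B u 0 T, 0) ∈ S) :
    (μ₀, 0) ∈ BRS T A B 0 c ax bx au bu S := by
  let C := Policy.ofOpenLoop T A B u μ₀
  refine ⟨PosSemidef.zero, C, rfl, fun i => i.elim0, fun j k hk => ?_, ?_⟩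
  · simpa [C, Policy.ofOpenLoop] using hu k hk j
  · rwa [C.mean_eq_pow_mulVec_add_openLoop (μ₀ := μ₀) rfl, C.cov_zero_zero]

end BRS

theorem strict_coverage_gain_general (n m T J : ℕ) (hn : 1 ≤ n)
    (c : ℝ) (hc : 0 < c)
    (A : Matrix (Fin n) (Fin n) ℝ) (hA : IsUnit A)
    (B : Matrix (Fin n) (Fin m) ℝ)
    (D : Matrix (Fin n) (Fin n) ℝ) (hD : D = 0)
    (au : Fin J → Fin m → ℝ) (bu : Fin J → ℝ)
    -- the control polytope is nonempty and compact:
    (hUne : {u : Fin m → ℝ | ∀ j, au j ⬝ᵥ u ≤ bu j}.Nonempty)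
    (hUcpt : IsCompact {u : Fin m → ℝ | ∀ j, au j ⬝ᵥ u ≤ bu j})
    (muG : Fin n → ℝ) (rG : ℝ) (hrG : 0 ≤ rG)
    -- 𝒢 = P^BALL(μ_G, r_G) and 𝒢⁻ ⊆ 𝒢 with small mean projection:
    (Gminus : Set ((Fin n → ℝ) × Matrix (Fin n) (Fin n) ℝ))
    (hGsub : Gminus ⊆ {p | p.2.PosSemidef ∧ inBall c muG rG p.1 p.2})
    (c0 : Fin n → ℝ) (r0 : ℝ)
    (hproj : Proj Gminus ⊆ {mu : Fin n → ℝ | euclNorm (mu - c0) ≤ r0})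
    (hlt : euclNorm (c0 - muG) + r0 < rG) :
    BRS T A B D c (fun i : Fin 0 => Fin.elim0 i) (fun i : Fin 0 => Fin.elim0 i) au bu Gminus
      ⊂ BRS T A B D c (fun i : Fin 0 => Fin.elim0 i) (fun i : Fin 0 => Fin.elim0 i) au bu
          {p | p.2.PosSemidef ∧ inBall c muG rG p.1 p.2} := by
  subst hD
  have : NeZero n := ⟨by omega⟩
  refine (Set.ssubset_iff_of_subset (BRS_mono hGsub)).2 ?_
  obtain ⟨v, hvU, hvmin⟩ := exists_admissible_isMinOn_openLoop A B hUcpt hUne T 0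
    (continuous_apply (0 : Fin n))
  obtain ⟨μ₀, hμ₀⟩ := mulVec_surjective_iff_isUnit.2 (hA.pow T)
    (muG + Pi.single 0 rG - openLoop A B v 0 T)
  refine ⟨(μ₀, 0), mem_BRS_zero_of_openLoop hvU ⟨PosSemidef.zero, ?_⟩, fun hmem => ?_⟩
  · simp [hμ₀, inBall, euclNorm_single, lamMax_zero, abs_of_nonneg hrG]
  obtain ⟨u, hu, hproj_u⟩ := exists_openLoop_mem_Proj_of_mem_BRS hc.le hmem
  have hv_le_u := hvmin u hu
  have hfar : muG 0 + rG ≤ ((A ^ T) *ᵥ μ₀ + openLoop A B u 0 T) 0 := by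
    simp only [hμ₀, Pi.add_apply, Pi.sub_apply, Pi.single_eq_same]
    linarith
  have hnear := (apply_le_euclNorm _ 0).trans (hproj hproj_u)
  have hcentre := apply_le_euclNorm (c0 - muG) 0
  simp only [Pi.sub_apply] at hnear hcentre
  linarith

/-- Strict coverage gain without process noise and state constraints, Lemma 4.
There are no state half-space constraints (the state-constraint family is indexed by `Fin 0`). -/
theorem strict_coverage_gain (n m T J : ℕ) (hn : 1 ≤ n) (hm : 1 ≤ m) (hT : 1 ≤ T)
    (c : ℝ) (hc : 0 < c)
    (A : Matrix (Fin n) (Fin n) ℝ) (hA : IsUnit A)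
    (B : Matrix (Fin n) (Fin m) ℝ)
    (D : Matrix (Fin n) (Fin n) ℝ) (hD : D = 0)
    (au : Fin J → Fin m → ℝ) (bu : Fin J → ℝ)
    -- the control polytope is nonempty and compact:
    (hUne : {u : Fin m → ℝ | ∀ j, au j ⬝ᵥ u ≤ bu j}.Nonempty)
    (hUcpt : IsCompact {u : Fin m → ℝ | ∀ j, au j ⬝ᵥ u ≤ bu j})
    (muG : Fin n → ℝ) (rG : ℝ) (hrG : 0 ≤ rG)
    -- 𝒢 = P^BALL(μ_G, r_G) and 𝒢⁻ ⊆ 𝒢 with small mean projection: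
    (Gminus : Set ((Fin n → ℝ) × Matrix (Fin n) (Fin n) ℝ))
    (hGsub : Gminus ⊆ {p | p.2.PosSemidef ∧ inBall c muG rG p.1 p.2})
    (c0 : Fin n → ℝ) (r0 : ℝ) (hr0 : 0 ≤ r0)
    (hproj : Proj Gminus ⊆ {mu : Fin n → ℝ | euclNorm (mu - c0) ≤ r0})
    (hlt : euclNorm (c0 - muG) + r0 < rG)
    (hne : (BRS T A B D c (fun i : Fin 0 => Fin.elim0 i) (fun i : Fin 0 => Fin.elim0 i)
      au bu Gminus).Nonempty) :
    BRS T A B D c (fun i : Fin 0 => Fin.elim0 i) (fun i : Fin 0 => Fin.elim0 i) au bu Gminus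
      ⊂ BRS T A B D c (fun i : Fin 0 => Fin.elim0 i) (fun i : Fin 0 => Fin.elim0 i) au bu
          {p | p.2.PosSemidef ∧ inBall c muG rG p.1 p.2} :=
  strict_coverage_gain_general n m T J hn c hc A hA B D hD au bu hUne hUcpt muG rG hrG Gminus hGsub
    c0 r0 hproj hlt
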